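/- For all real numbers x and y with d(x,y) = 0, 0 < x < 1, and −1/3 ≤ y < 0, one has Dτ(x,y) ≠ 0 and P(x,y) ≠ 0; in particular Dd(x,y) ≠ 0. -/
import Mathlib


def d (x y : ℝ) : ℝ := x^2*y + 3*x^2 - x*y - 3*y^2 - 3*x - 3*y
def Ntau (x y : ℝ) : ℝ := (y - x) * (2*x + 3*y + 1)
def Dtau (x y : ℝ) : ℝ := 2*x*y - 5*y - 3
def P (x y : ℝ) : ℝ :=
  4*x^4 + 3*x^2*y^2 - 20*x^3 - 6*x^2*y - 15*x*y^2 + 31*x^2 + 6*x*y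
    + 21*y^2 - 15*x + 18*y + 9
def Q1 (x y : ℝ) : ℝ :=
  -4*x^4 - 12*x^3*y + x^2*y^2 + 9*x*y^3 + 8*x^3 + 42*x^2*y + 10*x*y^2
    - 27*y^3 + 17*x^2 - 15*x*y - 38*y^2 - 12*x - 15*y
def Q2 (x y : ℝ) : ℝ :=
  4*x^4 - 4*x^3*y - 13*x^2*y^2 + 9*x*y^3 - 8*x^3 + 2*x^2*y + 44*x*y^2
    - 18*y^3 + 7*x^2 + 29*x*y - 49*y^2 + 6*x - 36*y - 9
def N1 (x y : ℝ) : ℝ := (-2*x + y + 3) * (x - 1) * Q1 x y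
def N2 (x y : ℝ) : ℝ := -(2*x^2 + x*y - 5*x - 4*y) * Q2 x y
def Dd (x y : ℝ) : ℝ := (2*x*y - 5*y - 3) * P x y

theorem denominators_nonzero (x y : ℝ) (hd : d x y = 0)
    (hx0 : 0 < x) (hx1 : x < 1) (hy0 : -1/3 ≤ y) (hy1 : y < 0) :
    Dtau x y ≠ 0 ∧ P x y ≠ 0 ∧ Dd x y ≠ 0 := by
  simp only [d] at hd
  have h1 : Dtau x y < 0 := by
    simp only [Dtau]
    nlinarith [mul_nonneg (neg_nonneg.2 hy1.le) (by linarith : (0:ℝ) ≤ 1 - x)]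
  have h2 : 0 < P x y := by
    simp only [P]
    nlinarith [sq_nonneg (x-1), sq_nonneg y, sq_nonneg (x*y),
      mul_pos hx0 (neg_pos.2 hy1), sq_nonneg (x + y), sq_nonneg (x*y - y),
      mul_nonneg (mul_nonneg hx0.le hx0.le) (sq_nonneg y)]
  exact ⟨ne_of_lt h1, ne_of_gt h2, by
    simp only [Dd]; exact mul_ne_zero (ne_of_lt h1) (ne_of_gt h2)⟩
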